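/- arXiv:2311.07173 — 2 statements merged into one kernel-verified Lean document; each statement's English description precedes it below -/
import Mathlib

section
/- Let 𝒞 = {(x₁,x₂,x₃) ∈ ℝ³ : x₂² + x₃² ≤ 1} and let r : ℝ³ → [1,∞) be a measurable exponent with 3 < ess inf_{ℝ³∖𝒞} r ≤ ess sup_{ℝ³∖𝒞} r < ∞ and 1 < ess inf_𝒞 r ≤ ess sup_𝒞 r < 3. Let θ ∈ C_c^∞(ℝ³) with 0 ≤ θ ≤ 1, θ(x) = 1 for |x| ≤ 1 and θ(x) = 0 for |x| ≥ 2, and for R > 1 set θ_R(x) = θ(x/R). Then ‖ |∇θ_R| ‖_{L^{r(·)}(ℝ³)} → 0 as R → ∞, where ∇θ_R is the gradient of θ_R. -/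
open MeasureTheory Filter Metric
open scoped ENNReal Topology NNReal

noncomputable section

/-- `ℝ³` as a Euclidean space (coordinates `x 0, x 1, x 2` standing for `x₁, x₂, x₃`). -/
abbrev E3 : Type := EuclideanSpace ℝ (Fin 3)

/-- Partial derivative `∂ᵢ g` of a scalar function on `ℝ³`. -/
def pd (i : Fin 3) (g : E3 → ℝ) (x : E3) : ℝ :=
  fderiv ℝ g x (EuclideanSpace.single i 1)

/-- Laplacian of a scalar function on `ℝ³`. -/
def lap3 (g : E3 → ℝ) (x : E3) : ℝ := ∑ i : Fin 3, pd i (pd i g) x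

/-- The modular `ρ_{p(·)}(f) = ∫ |f|^{p(x)} dx` for a finite real-valued variable exponent. -/
def modularV (p : E3 → ℝ) (f : E3 → ℝ) : ℝ≥0∞ :=
  ∫⁻ x, ENNReal.ofReal (|f x| ^ p x)

/-- Membership in the variable exponent Lebesgue space `L^{p(·)}(ℝ³)`
(finiteness of the Luxemburg norm). -/
def MemVarLp (p : E3 → ℝ) (f : E3 → ℝ) : Prop :=
  ∃ l : ℝ, 0 < l ∧ modularV p (fun x => f x / l) ≤ 1

/-- The Luxemburg norm `‖f‖_{L^{p(·)}(ℝ³)}`. -/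
def varLpNorm (p : E3 → ℝ) (f : E3 → ℝ) : ℝ :=
  sInf {l : ℝ | 0 < l ∧ modularV p (fun x => f x / l) ≤ 1}

/-- `(u, P)` is a weak solution of the stationary Navier–Stokes equations
`Δu − (u·∇)u − ∇P = 0`, `div u = 0` on `ℝ³`. -/
def IsWeakSolutionNS (u : E3 → E3) (P : E3 → ℝ) : Prop :=
  (∀ φ : E3 → E3, ContDiff ℝ (⊤ : ℕ∞) φ → HasCompactSupport φ →
      ((∫ x, ∑ j : Fin 3, u x j * lap3 (fun y => φ y j) x) +
        (∑ i : Fin 3, ∑ j : Fin 3, ∫ x, u x i * u x j * pd i (fun y => φ y j) x) +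
        (∫ x, P x * ∑ j : Fin 3, pd j (fun y => φ y j) x) = 0)) ∧
  (∀ ψ : E3 → ℝ, ContDiff ℝ (⊤ : ℕ∞) ψ → HasCompactSupport ψ →
      (∫ x, ∑ j : Fin 3, u x j * pd j ψ x) = 0)

/-- The infinite cylinder `𝒞 = {x ∈ ℝ³ : x₂² + x₃² ≤ 1}`. -/
def cylC : Set E3 := {x | (x 1) ^ 2 + (x 2) ^ 2 ≤ 1}

/-- Each coordinate of a point of `ℝ³` is bounded by the Euclidean norm. -/
lemma coord_abs_le_norm (x : E3) (i : Fin 3) : |x i| ≤ ‖x‖ := by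
  have h : ‖x i‖ ^ 2 ≤ ∑ j : Fin 3, ‖x j‖ ^ 2 :=
    Finset.single_le_sum (f := fun j => ‖x j‖ ^ 2) (fun j _ => sq_nonneg _) (Finset.mem_univ i)
  calc |x i| = Real.sqrt (‖x i‖ ^ 2) := by
        rw [Real.sqrt_sq_eq_abs, Real.norm_eq_abs, abs_abs]
    _ ≤ Real.sqrt (∑ j : Fin 3, ‖x j‖ ^ 2) := Real.sqrt_le_sqrt h
    _ = ‖x‖ := (EuclideanSpace.norm_eq x).symm

/-- Volume of a coordinate box in `ℝ³`. -/
lemma vol_box (d : Fin 3 → ℝ) :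
    volume {x : E3 | ∀ i, |x i| ≤ d i} = ∏ i, ENNReal.ofReal (2 * d i) := by
  have h := EuclideanSpace.volume_preserving_symm_measurableEquiv_toLp (Fin 3)
  have hs : {x : E3 | ∀ i, |x i| ≤ d i}
      = (MeasurableEquiv.toLp 2 (Fin 3 → ℝ)).symm ⁻¹'
        (Set.univ.pi fun i => Set.Icc (-(d i)) (d i)) := by
    ext x
    simp only [Set.mem_preimage, Set.mem_univ_pi, Set.mem_Icc, Set.mem_setOf_eq, abs_le,
      MeasurableEquiv.coe_mk, Equiv.coe_fn_mk]
    exact Iff.rfl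
  rw [hs, h.measure_preimage
    (MeasurableSet.univ_pi fun i => measurableSet_Icc).nullMeasurableSet,
    volume_pi_pi]
  congr 1
  ext i
  rw [Real.volume_Icc]
  congr 1
  ring

set_option maxHeartbeats 1000000 in
/-- Decay of `‖|∇θ_R|‖_{L^{r(·)}(ℝ³)}` as `R → ∞` for the conjugate-type exponent `r`
adapted to the cylinder `𝒞`. -/
theorem gradient_cutoff_norm_tendsto_zero_cylinder
    (r : E3 → ℝ) (hrmeas : Measurable r) (hr1 : ∀ x, 1 ≤ r x)
    (hout_lb : (3 : ℝ) < essInf r (volume.restrict cylCᶜ))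
    (hout_le : essInf r (volume.restrict cylCᶜ) ≤ essSup r (volume.restrict cylCᶜ))
    (hout_ub : IsBoundedUnder (· ≤ ·) (ae (volume.restrict cylCᶜ)) r)
    (hin_lb : (1 : ℝ) < essInf r (volume.restrict cylC))
    (hin_le : essInf r (volume.restrict cylC) ≤ essSup r (volume.restrict cylC))
    (hin_ub : essSup r (volume.restrict cylC) < 3)
    (θ : E3 → ℝ) (hθsmooth : ContDiff ℝ (⊤ : ℕ∞) θ) (hθsupp : HasCompactSupport θ)
    (hθ0 : ∀ x, 0 ≤ θ x) (hθ1 : ∀ x, θ x ≤ 1)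
    (hθin : ∀ x : E3, ‖x‖ ≤ 1 → θ x = 1) (hθout : ∀ x : E3, 2 ≤ ‖x‖ → θ x = 0) :
    Tendsto (fun R : ℝ => varLpNorm r
        (fun x => Real.sqrt (∑ i : Fin 3, (pd i (fun y => θ (R⁻¹ • y)) x) ^ 2)))
      atTop (𝓝 0) := by
  classical
  -- a uniform bound for the gradient of θ
  obtain ⟨C0, hC0⟩ : ∃ C0 : ℝ, ∀ y, ‖fderiv ℝ θ y‖ ≤ C0 :=
    (hθsmooth.continuous_fderiv (by simp)).bounded_above_of_compact_support (hθsupp.fderiv ℝ)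
  have hC0nn : 0 ≤ C0 := le_trans (norm_nonneg _) (hC0 0)
  set Cg : ℝ := 2 * C0 + 1 with hCg_def
  have hCg : 0 < Cg := by simp only [hCg_def]; linarith
  -- the exponents
  set q : ℝ := (1 + essInf r (volume.restrict cylC)) / 2 with hq_def
  set m : ℝ := (3 + essInf r (volume.restrict cylCᶜ)) / 2 with hm_def
  have hq1 : 1 < q := by simp only [hq_def]; linarith
  have hqlt : q < essInf r (volume.restrict cylC) := by simp only [hq_def]; linarith
  have hm3 : 3 < m := by simp only [hm_def]; linarith
  have hmlt : m < essInf r (volume.restrict cylCᶜ) := by simp only [hm_def]; linarith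
  -- measurability of the cylinder
  have hmC : MeasurableSet cylC := by
    have h1 : Continuous fun x : E3 => (x 1) ^ 2 + (x 2) ^ 2 :=
      (((EuclideanSpace.proj (1 : Fin 3) : E3 →L[ℝ] ℝ).continuous).pow 2).add
        (((EuclideanSpace.proj (2 : Fin 3) : E3 →L[ℝ] ℝ).continuous).pow 2)
    exact measurableSet_le h1.measurable measurable_const
  -- a.e. lower bounds for r
  have hbdd : ∀ μ' : Measure E3, IsBoundedUnder (· ≥ ·) (ae μ') r := fun μ' =>
    isBoundedUnder_of ⟨1, fun x => hr1 x⟩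
  have hae_in : ∀ᵐ x ∂(volume : Measure E3), x ∈ cylC → q < r x :=
    (ae_restrict_iff' hmC).mp (ae_lt_of_lt_essInf hqlt (hbdd _))
  have hae_out : ∀ᵐ x ∂(volume : Measure E3), x ∈ cylCᶜ → m < r x :=
    (ae_restrict_iff' hmC.compl).mp (ae_lt_of_lt_essInf hmlt (hbdd _))
  -- the derivative of the rescaled cutoff
  have hpd : ∀ R : ℝ, 0 < R → ∀ (x : E3) (i : Fin 3),
      pd i (fun y => θ (R⁻¹ • y)) x
        = R⁻¹ * (fderiv ℝ θ (R⁻¹ • x)) (EuclideanSpace.single i 1) := by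
    intro R hR x i
    have h1 : HasFDerivAt (fun y : E3 => R⁻¹ • y)
        (R⁻¹ • ContinuousLinearMap.id ℝ E3) x := (hasFDerivAt_id x).const_smul R⁻¹
    have h2 : HasFDerivAt θ (fderiv ℝ θ (R⁻¹ • x)) (R⁻¹ • x) :=
      (hθsmooth.differentiable (by simp) (R⁻¹ • x)).hasFDerivAt
    have h3 : HasFDerivAt (fun y : E3 => θ (R⁻¹ • y))
        ((fderiv ℝ θ (R⁻¹ • x)).comp (R⁻¹ • ContinuousLinearMap.id ℝ E3)) x := h2.comp x h1
    rw [pd, h3.fderiv]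
    simp [ContinuousLinearMap.smul_apply, _root_.map_smul, smul_eq_mul]
  have hpd_bound : ∀ R : ℝ, 0 < R → ∀ (x : E3) (i : Fin 3),
      |pd i (fun y => θ (R⁻¹ • y)) x| ≤ C0 / R := by
    intro R hR x i
    rw [hpd R hR x i, abs_mul, abs_inv, abs_of_pos hR]
    have h4 : |(fderiv ℝ θ (R⁻¹ • x)) (EuclideanSpace.single i 1)| ≤ C0 := by
      calc |(fderiv ℝ θ (R⁻¹ • x)) (EuclideanSpace.single i 1)|
          = ‖(fderiv ℝ θ (R⁻¹ • x)) (EuclideanSpace.single i 1)‖ := (Real.norm_eq_abs _).symm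
        _ ≤ ‖fderiv ℝ θ (R⁻¹ • x)‖ * ‖EuclideanSpace.single i (1 : ℝ)‖ :=
            (fderiv ℝ θ (R⁻¹ • x)).le_opNorm _
        _ = ‖fderiv ℝ θ (R⁻¹ • x)‖ := by rw [EuclideanSpace.norm_single]; simp
        _ ≤ C0 := hC0 _
    rw [div_eq_inv_mul]
    exact mul_le_mul_of_nonneg_left h4 (inv_nonneg.2 hR.le)
  -- the bound on |∇θ_R|
  have hFle : ∀ R : ℝ, 0 < R → ∀ x : E3,
      Real.sqrt (∑ i : Fin 3, (pd i (fun y => θ (R⁻¹ • y)) x) ^ 2) ≤ Cg / R := by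
    intro R hR x
    have h2 : ∀ i : Fin 3, (pd i (fun y => θ (R⁻¹ • y)) x) ^ 2 ≤ (C0 / R) ^ 2 := by
      intro i
      calc (pd i (fun y => θ (R⁻¹ • y)) x) ^ 2
          = |pd i (fun y => θ (R⁻¹ • y)) x| ^ 2 := (sq_abs _).symm
        _ ≤ (C0 / R) ^ 2 := pow_le_pow_left₀ (abs_nonneg _) (hpd_bound R hR x i) 2
    have h1 : ∑ i : Fin 3, (pd i (fun y => θ (R⁻¹ • y)) x) ^ 2 ≤ (Cg / R) ^ 2 := by
      have h3 : (3 : ℝ) * C0 ^ 2 ≤ Cg ^ 2 := by simp only [hCg_def]; nlinarith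
      calc ∑ i : Fin 3, (pd i (fun y => θ (R⁻¹ • y)) x) ^ 2
          ≤ ∑ _i : Fin 3, (C0 / R) ^ 2 := Finset.sum_le_sum fun i _ => h2 i
        _ = 3 * (C0 / R) ^ 2 := by simp [Finset.sum_const, mul_comm]
        _ = 3 * C0 ^ 2 * (1 / R) ^ 2 := by ring
        _ ≤ Cg ^ 2 * (1 / R) ^ 2 := mul_le_mul_of_nonneg_right h3 (by positivity)
        _ = (Cg / R) ^ 2 := by ring
    calc Real.sqrt (∑ i : Fin 3, (pd i (fun y => θ (R⁻¹ • y)) x) ^ 2)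
        ≤ Real.sqrt ((Cg / R) ^ 2) := Real.sqrt_le_sqrt h1
      _ = Cg / R := Real.sqrt_sq (by positivity)
  -- |∇θ_R| vanishes off the annulus
  have hF0 : ∀ R : ℝ, 0 < R → ∀ x : E3, (‖x‖ < R ∨ 2 * R < ‖x‖) →
      Real.sqrt (∑ i : Fin 3, (pd i (fun y => θ (R⁻¹ • y)) x) ^ 2) = 0 := by
    intro R hR x hx
    have hz : ∀ i : Fin 3, pd i (fun y => θ (R⁻¹ • y)) x = 0 := by
      intro i
      rcases hx with hx | hx
      · have hev : (fun y : E3 => θ (R⁻¹ • y)) =ᶠ[𝓝 x] fun _ => (1 : ℝ) := by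
          filter_upwards [Metric.isOpen_ball.mem_nhds
            (show x ∈ Metric.ball (0 : E3) R by simpa using hx)] with y hy
          apply hθin
          have hy' : ‖y‖ < R := by simpa using hy
          rw [norm_smul, norm_inv, Real.norm_eq_abs, abs_of_pos hR]
          calc R⁻¹ * ‖y‖ ≤ R⁻¹ * R :=
              mul_le_mul_of_nonneg_left hy'.le (inv_nonneg.2 hR.le)
            _ = 1 := inv_mul_cancel₀ hR.ne'
        rw [pd, hev.fderiv_eq]
        simp
      · have hopen : IsOpen {y : E3 | 2 * R < ‖y‖} := isOpen_lt continuous_const continuous_norm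
        have hev : (fun y : E3 => θ (R⁻¹ • y)) =ᶠ[𝓝 x] fun _ => (0 : ℝ) := by
          filter_upwards [hopen.mem_nhds hx] with y hy
          apply hθout
          rw [norm_smul, norm_inv, Real.norm_eq_abs, abs_of_pos hR]
          have : R⁻¹ * (2 * R) ≤ R⁻¹ * ‖y‖ :=
            mul_le_mul_of_nonneg_left (le_of_lt hy) (inv_nonneg.2 hR.le)
          calc (2 : ℝ) = R⁻¹ * (2 * R) := by field_simp
            _ ≤ R⁻¹ * ‖y‖ := this
        rw [pd, hev.fderiv_eq]
        simp
    simp [hz]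
  -- main argument
  rw [NormedAddCommGroup.tendsto_nhds_zero]
  intro ε hε
  set ε' : ℝ := ε / 2 with hε'_def
  have hε' : 0 < ε' := half_pos hε
  -- the modular of f_R / ε' is eventually at most 1
  have hmain : ∀ᶠ R : ℝ in atTop, modularV r
      (fun x => (Real.sqrt (∑ i : Fin 3, (pd i (fun y => θ (R⁻¹ • y)) x) ^ 2)) / ε') ≤ 1 := by
    set a : ℝ := Cg / ε' with ha_def
    have ha : 0 < a := by positivity
    have htend : Tendsto (fun R : ℝ =>
        16 * a ^ q * R ^ (1 - q) + 64 * a ^ m * R ^ (3 - m)) atTop (𝓝 0) := by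
      have t1 : Tendsto (fun R : ℝ => R ^ (1 - q)) atTop (𝓝 0) := by
        have := tendsto_rpow_neg_atTop (show (0 : ℝ) < q - 1 by linarith)
        simpa [neg_sub] using this
      have t2 : Tendsto (fun R : ℝ => R ^ (3 - m)) atTop (𝓝 0) := by
        have := tendsto_rpow_neg_atTop (show (0 : ℝ) < m - 3 by linarith)
        simpa [neg_sub] using this
      have := (t1.const_mul (16 * a ^ q)).add (t2.const_mul (64 * a ^ m))
      simpa using this
    have hev1 : ∀ᶠ R : ℝ in atTop,
        16 * a ^ q * R ^ (1 - q) + 64 * a ^ m * R ^ (3 - m) ≤ 1 :=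
      htend.eventually (eventually_le_nhds one_pos)
    filter_upwards [hev1, eventually_ge_atTop (Cg / ε'), eventually_gt_atTop (0 : ℝ)]
      with R hR1 hRc hRpos
    set B₀ : ℝ := Cg / (R * ε') with hB₀_def
    have hB₀eq : B₀ = a / R := by rw [hB₀_def, ha_def, div_div]; ring_nf
    have hB₀pos : 0 < B₀ := by positivity
    have hB₀le1 : B₀ ≤ 1 := by
      rw [hB₀_def, div_le_one (by positivity)]
      calc Cg = Cg / ε' * ε' := by field_simp
        _ ≤ R * ε' := by exact mul_le_mul_of_nonneg_right hRc hε'.le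
    set A : Set E3 := cylC ∩ Metric.closedBall (0 : E3) (2 * R) with hA_def
    set Bs : Set E3 := cylCᶜ ∩ Metric.closedBall (0 : E3) (2 * R) with hBs_def
    have hAm : MeasurableSet A := hmC.inter measurableSet_closedBall
    have hBm : MeasurableSet Bs := hmC.compl.inter measurableSet_closedBall
    -- pointwise a.e. bound on the integrand
    have hpt : ∀ᵐ x ∂(volume : Measure E3),
        ENNReal.ofReal (|Real.sqrt (∑ i : Fin 3, (pd i (fun y => θ (R⁻¹ • y)) x) ^ 2) / ε'| ^ r x)
          ≤ A.indicator (fun _ => ENNReal.ofReal (B₀ ^ q)) x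
            + Bs.indicator (fun _ => ENNReal.ofReal (B₀ ^ m)) x := by
      filter_upwards [hae_in, hae_out] with x hin hout
      have hzero_case : Real.sqrt (∑ i : Fin 3, (pd i (fun y => θ (R⁻¹ • y)) x) ^ 2) = 0 →
          ENNReal.ofReal (|Real.sqrt (∑ i : Fin 3, (pd i (fun y => θ (R⁻¹ • y)) x) ^ 2) / ε'| ^ r x)
            = 0 := by
        intro h0
        rw [h0, zero_div, abs_zero, Real.zero_rpow (by have := hr1 x; intro hc; rw [hc] at this; linarith)]
        simp
      by_cases hx2 : ‖x‖ ≤ 2 * R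
      · by_cases hx1 : ‖x‖ < R
        · rw [hzero_case (hF0 R hRpos x (Or.inl hx1))]
          exact zero_le
        · push_neg at hx1
          have hbb : |Real.sqrt (∑ i : Fin 3, (pd i (fun y => θ (R⁻¹ • y)) x) ^ 2) / ε'| ≤ B₀ := by
            rw [abs_of_nonneg (div_nonneg (Real.sqrt_nonneg _) hε'.le)]
            calc Real.sqrt (∑ i : Fin 3, (pd i (fun y => θ (R⁻¹ • y)) x) ^ 2) / ε'
                ≤ (Cg / R) / ε' := by gcongr; exact hFle R hRpos x
              _ = B₀ := by rw [hB₀_def, div_div]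
          have hkey : ∀ e : ℝ, 0 < e → e ≤ r x →
              |Real.sqrt (∑ i : Fin 3, (pd i (fun y => θ (R⁻¹ • y)) x) ^ 2) / ε'| ^ r x
                ≤ B₀ ^ e := by
            intro e he hle
            calc |Real.sqrt (∑ i : Fin 3, (pd i (fun y => θ (R⁻¹ • y)) x) ^ 2) / ε'| ^ r x
                ≤ B₀ ^ r x :=
                  Real.rpow_le_rpow (abs_nonneg _) hbb (by have := hr1 x; linarith)
              _ ≤ B₀ ^ e := Real.rpow_le_rpow_of_exponent_ge hB₀pos hB₀le1 hle
          have hxball : x ∈ Metric.closedBall (0 : E3) (2 * R) :=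
            mem_closedBall_zero_iff.mpr hx2
          by_cases hxC : x ∈ cylC
          · calc ENNReal.ofReal (|Real.sqrt (∑ i : Fin 3, (pd i (fun y => θ (R⁻¹ • y)) x) ^ 2) / ε'| ^ r x)
                ≤ ENNReal.ofReal (B₀ ^ q) :=
                  ENNReal.ofReal_le_ofReal (hkey q (by linarith) (hin hxC).le)
              _ = A.indicator (fun _ => ENNReal.ofReal (B₀ ^ q)) x := by
                  rw [Set.indicator_of_mem (show x ∈ A from ⟨hxC, hxball⟩)]
              _ ≤ _ := le_self_add
          · calc ENNReal.ofReal (|Real.sqrt (∑ i : Fin 3, (pd i (fun y => θ (R⁻¹ • y)) x) ^ 2) / ε'| ^ r x)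
                ≤ ENNReal.ofReal (B₀ ^ m) :=
                  ENNReal.ofReal_le_ofReal (hkey m (by linarith) (hout hxC).le)
              _ = Bs.indicator (fun _ => ENNReal.ofReal (B₀ ^ m)) x := by
                  rw [Set.indicator_of_mem (show x ∈ Bs from ⟨hxC, hxball⟩)]
              _ ≤ _ := le_add_self
      · push_neg at hx2
        rw [hzero_case (hF0 R hRpos x (Or.inr hx2))]
        exact zero_le
    -- volume bounds
    have hvolA : volume A ≤ ENNReal.ofReal (16 * R) := by
      have hsub : A ⊆ {x : E3 | ∀ i, |x i| ≤ (![2 * R, 1, 1] : Fin 3 → ℝ) i} := by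
        rintro x ⟨hxC, hxb⟩ i
        have hxn : ‖x‖ ≤ 2 * R := mem_closedBall_zero_iff.mp hxb
        have hxC' : (x 1) ^ 2 + (x 2) ^ 2 ≤ 1 := hxC
        fin_cases i
        · simpa using (coord_abs_le_norm x 0).trans hxn
        · have h1 : (x 1) ^ 2 ≤ 1 := by nlinarith [sq_nonneg (x 2)]
          simpa using (sq_le_one_iff_abs_le_one _).mp h1
        · have h1 : (x 2) ^ 2 ≤ 1 := by nlinarith [sq_nonneg (x 1)]
          simpa using (sq_le_one_iff_abs_le_one _).mp h1
      calc volume A ≤ volume {x : E3 | ∀ i, |x i| ≤ (![2 * R, 1, 1] : Fin 3 → ℝ) i} :=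
            measure_mono hsub
        _ = ∏ i, ENNReal.ofReal (2 * (![2 * R, 1, 1] : Fin 3 → ℝ) i) := vol_box _
        _ = ENNReal.ofReal (16 * R) := by
            rw [Fin.prod_univ_three]
            simp only [Matrix.cons_val_zero, Matrix.cons_val_one, Matrix.head_cons,
              Matrix.cons_val_two, Matrix.tail_cons]
            rw [← ENNReal.ofReal_mul (by positivity), ← ENNReal.ofReal_mul (by positivity)]
            norm_num
            rw [show (16 : ℝ≥0∞) * ENNReal.ofReal R = ENNReal.ofReal (16 * R) by
                rw [ENNReal.ofReal_mul (by norm_num)]; norm_num]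
            congr 1
            ring
    have hvolB : volume Bs ≤ ENNReal.ofReal (64 * R ^ 3) := by
      have hsub : Bs ⊆ {x : E3 | ∀ i, |x i| ≤ (fun _ : Fin 3 => 2 * R) i} := by
        rintro x ⟨_, hxb⟩ i
        exact (coord_abs_le_norm x i).trans (mem_closedBall_zero_iff.mp hxb)
      calc volume Bs ≤ volume {x : E3 | ∀ i, |x i| ≤ (fun _ : Fin 3 => 2 * R) i} :=
            measure_mono hsub
        _ = ∏ _i : Fin 3, ENNReal.ofReal (2 * (2 * R)) := vol_box _
        _ = ENNReal.ofReal (64 * R ^ 3) := by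
            rw [Fin.prod_univ_three]
            rw [← ENNReal.ofReal_mul (by positivity), ← ENNReal.ofReal_mul (by positivity)]
            congr 1
            ring
    -- the real algebraic identity
    have h1alg : B₀ ^ q * (16 * R) = 16 * a ^ q * R ^ (1 - q) := by
      have hpow : (a / R) ^ q = a ^ q * R ^ (-q) := by
        rw [div_eq_mul_inv, Real.mul_rpow ha.le (inv_nonneg.2 hRpos.le),
          Real.inv_rpow hRpos.le, ← Real.rpow_neg hRpos.le]
      rw [hB₀eq, hpow, show (1 : ℝ) - q = -q + 1 by ring, Real.rpow_add hRpos, Real.rpow_one]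
      ring
    have h2alg : B₀ ^ m * (64 * R ^ 3) = 64 * a ^ m * R ^ (3 - m) := by
      have hpow : (a / R) ^ m = a ^ m * R ^ (-m) := by
        rw [div_eq_mul_inv, Real.mul_rpow ha.le (inv_nonneg.2 hRpos.le),
          Real.inv_rpow hRpos.le, ← Real.rpow_neg hRpos.le]
      rw [hB₀eq, hpow, show (3 : ℝ) - m = -m + 3 by ring, Real.rpow_add hRpos]
      rw [show ((3 : ℝ) : ℝ) = ((3 : ℕ) : ℝ) by norm_num, Real.rpow_natCast]
      ring
    -- putting it together
    calc modularV r (fun x =>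
          (Real.sqrt (∑ i : Fin 3, (pd i (fun y => θ (R⁻¹ • y)) x) ^ 2)) / ε')
        ≤ ∫⁻ x, (A.indicator (fun _ => ENNReal.ofReal (B₀ ^ q)) x
            + Bs.indicator (fun _ => ENNReal.ofReal (B₀ ^ m)) x) := lintegral_mono_ae hpt
      _ = ENNReal.ofReal (B₀ ^ q) * volume A + ENNReal.ofReal (B₀ ^ m) * volume Bs := by
          rw [lintegral_add_left (measurable_const.indicator hAm),
            lintegral_indicator_const hAm, lintegral_indicator_const hBm]
      _ ≤ ENNReal.ofReal (B₀ ^ q) * ENNReal.ofReal (16 * R)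
            + ENNReal.ofReal (B₀ ^ m) * ENNReal.ofReal (64 * R ^ 3) := by
          gcongr
      _ = ENNReal.ofReal (B₀ ^ q * (16 * R) + B₀ ^ m * (64 * R ^ 3)) := by
          rw [← ENNReal.ofReal_mul (by positivity), ← ENNReal.ofReal_mul (by positivity),
            ← ENNReal.ofReal_add (by positivity) (by positivity)]
      _ ≤ 1 := by
          rw [← ENNReal.ofReal_one]
          apply ENNReal.ofReal_le_ofReal
          rw [h1alg, h2alg]
          exact hR1
  -- conclude
  filter_upwards [hmain] with R hmod
  have hmem : ε' ∈ {l : ℝ | 0 < l ∧ modularV r (fun x =>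
      (Real.sqrt (∑ i : Fin 3, (pd i (fun y => θ (R⁻¹ • y)) x) ^ 2)) / l) ≤ 1} := ⟨hε', hmod⟩
  have hbddS : BddBelow {l : ℝ | 0 < l ∧ modularV r (fun x =>
      (Real.sqrt (∑ i : Fin 3, (pd i (fun y => θ (R⁻¹ • y)) x) ^ 2)) / l) ≤ 1} :=
    ⟨0, fun l hl => hl.1.le⟩
  have h1 : varLpNorm r (fun x =>
      Real.sqrt (∑ i : Fin 3, (pd i (fun y => θ (R⁻¹ • y)) x) ^ 2)) ≤ ε' :=
    csInf_le hbddS hmem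
  have h2 : 0 ≤ varLpNorm r (fun x =>
      Real.sqrt (∑ i : Fin 3, (pd i (fun y => θ (R⁻¹ • y)) x) ^ 2)) :=
    le_csInf ⟨ε', hmem⟩ fun l hl => hl.1.le
  rw [Real.norm_eq_abs, abs_of_nonneg h2]
  have : ε' < ε := by rw [hε'_def]; linarith
  linarith
end
end

section
/- Fix 0 < σ < 1, let 𝒩 = {(x₁,x₂,x₃) ∈ ℝ³ : x₂² + x₃² ≤ x₁^{−σ/2}, x₁ > 0}, and let q : ℝ³ → [1,∞) be a measurable exponent with 9/5 < ess inf_{ℝ³∖𝒩} q ≤ ess sup_{ℝ³∖𝒩} q < 3 and q(x) = 1 for all x ∈ 𝒩. Let θ ∈ C_c^∞(ℝ³) with 0 ≤ θ ≤ 1, θ(x) = 1 for |x| ≤ 1 and θ(x) = 0 for |x| ≥ 2, and for R > 1 set θ_R(x) = θ(x/R). Then ‖Δθ_R‖_{L^{q(·)}(ℝ³)} → 0 as R → ∞. -/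
open MeasureTheory Filter Metric
open scoped ENNReal Topology NNReal

noncomputable section

/-- The shrinking region `𝒩 = {x ∈ ℝ³ : x₂² + x₃² ≤ x₁^{-σ/2}, x₁ > 0}`. -/
def setN (σ : ℝ) : Set E3 := {x | 0 < x 0 ∧ (x 1) ^ 2 + (x 2) ^ 2 ≤ (x 0) ^ (-(σ / 2))}

/-! ### Auxiliary lemmas -/

lemma contDiff_pd (i : Fin 3) {g : E3 → ℝ} (hg : ContDiff ℝ (⊤ : ℕ∞) g) : ContDiff ℝ (⊤ : ℕ∞) (pd i g) := by
  have h1 : ContDiff ℝ (⊤ : ℕ∞) (fderiv ℝ g) := hg.fderiv_right (by simp)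
  exact h1.clm_apply contDiff_const

lemma pd_comp_smul {g : E3 → ℝ} (hg : Differentiable ℝ g) (c : ℝ) (i : Fin 3) (x : E3) :
    pd i (fun y => g (c • y)) x = c * pd i g (c • x) := by
  have hd : HasFDerivAt (fun y : E3 => c • y) (c • ContinuousLinearMap.id ℝ E3) x :=
    (hasFDerivAt_id x).const_smul c
  have hcomp : HasFDerivAt (fun y : E3 => g (c • y))
      ((fderiv ℝ g (c • x)).comp (c • ContinuousLinearMap.id ℝ E3)) x :=
    ((hg (c • x)).hasFDerivAt).comp x hd
  rw [pd, hcomp.fderiv]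
  simp only [pd, ContinuousLinearMap.comp_apply, ContinuousLinearMap.smul_apply,
    ContinuousLinearMap.id_apply, ContinuousLinearMap.map_smul, smul_eq_mul]

lemma pd_const_mul {g : E3 → ℝ} (hg : Differentiable ℝ g) (c : ℝ) (i : Fin 3) (x : E3) :
    pd i (fun y => c * g y) x = c * pd i g x := by
  rw [pd, fderiv_const_mul (hg x)]
  simp [pd]

lemma lap3_comp_smul {g : E3 → ℝ} (hg : ContDiff ℝ (⊤ : ℕ∞) g) (c : ℝ) (x : E3) :
    lap3 (fun y => g (c • y)) x = c ^ 2 * lap3 g (c • x) := by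
  unfold lap3
  rw [Finset.mul_sum]
  refine Finset.sum_congr rfl fun i _ => ?_
  have h1 : (pd i fun y => g (c • y)) = (fun z => c * pd i g (c • z)) :=
    funext (pd_comp_smul (hg.differentiable (by simp)) c i)
  have h2 : Differentiable ℝ (fun z : E3 => pd i g (c • z)) :=
    (((contDiff_pd i hg).differentiable (by simp)).comp ((differentiable_id.const_smul c)))
  rw [h1, pd_const_mul h2 c i x, pd_comp_smul ((contDiff_pd i hg).differentiable (by simp)) c i x]
  ring

lemma pd_eq_zero_of_zero_on_open {g : E3 → ℝ} {s : Set E3} (hs : IsOpen s)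
    (hz : ∀ y ∈ s, g y = 0) (i : Fin 3) : ∀ y ∈ s, pd i g y = 0 := by
  intro y hy
  have h : g =ᶠ[𝓝 y] fun _ => (0 : ℝ) := by
    filter_upwards [hs.mem_nhds hy] with z hz' using hz z hz'
  rw [pd, h.fderiv_eq]
  simp

lemma lap3_eq_zero_of_zero_on_open {g : E3 → ℝ} {s : Set E3} (hs : IsOpen s)
    (hz : ∀ y ∈ s, g y = 0) : ∀ y ∈ s, lap3 g y = 0 := by
  intro y hy
  unfold lap3
  refine Finset.sum_eq_zero fun i _ => ?_
  exact pd_eq_zero_of_zero_on_open hs (pd_eq_zero_of_zero_on_open hs hz i) i y hy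

lemma lap3_continuous {g : E3 → ℝ} (hg : ContDiff ℝ (⊤ : ℕ∞) g) : Continuous (lap3 g) := by
  unfold lap3
  exact continuous_finset_sum _ fun i _ =>
    ((contDiff_pd i (contDiff_pd i hg)).continuous)

lemma lap3_bound {θ : E3 → ℝ} (hθ : ContDiff ℝ (⊤ : ℕ∞) θ) (hθout : ∀ x : E3, 2 ≤ ‖x‖ → θ x = 0) :
    ∃ C : ℝ, 1 ≤ C ∧ (∀ y, |lap3 θ y| ≤ C) ∧ (∀ y : E3, 2 < ‖y‖ → lap3 θ y = 0) := by
  have hopen : IsOpen {y : E3 | 2 < ‖y‖} := isOpen_lt continuous_const continuous_norm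
  have hvan : ∀ y : E3, 2 < ‖y‖ → lap3 θ y = 0 :=
    lap3_eq_zero_of_zero_on_open hopen (fun y hy => hθout y (le_of_lt hy))
  obtain ⟨C, hC⟩ := (isCompact_closedBall (0 : E3) 2).exists_bound_of_continuousOn
    (lap3_continuous hθ).continuousOn
  refine ⟨max C 1, le_max_right _ _, fun y => ?_, hvan⟩
  rcases le_or_gt ‖y‖ 2 with h | h
  · calc |lap3 θ y| ≤ C := by
          simpa [Real.norm_eq_abs] using
            hC y (by simpa [Metric.mem_closedBall, dist_zero_right] using h)
        _ ≤ max C 1 := le_max_left _ _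
  · rw [hvan y h]
    simp

lemma measurableSet_setN (σ : ℝ) : MeasurableSet (setN σ) := by
  have h0 : Measurable fun x : E3 => x 0 := (measurable_pi_apply _).comp (WithLp.measurable_ofLp 2 _)
  have h1 : Measurable fun x : E3 => x 1 := (measurable_pi_apply _).comp (WithLp.measurable_ofLp 2 _)
  have h2 : Measurable fun x : E3 => x 2 := (measurable_pi_apply _).comp (WithLp.measurable_ofLp 2 _)
  have hr : Measurable fun x : E3 => (x 0) ^ (-(σ / 2)) := by
    have : Measurable fun t : ℝ => t ^ (-(σ / 2)) := by measurability
    exact this.comp h0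
  exact (measurableSet_lt measurable_const h0).inter
    (measurableSet_le ((h1.pow_const 2).add (h2.pow_const 2)) hr)

lemma volume_setN_le (σ : ℝ) (hσ0 : 0 < σ) (hσ1 : σ < 1) (b : ℝ) (hb : 0 ≤ b) :
    volume (setN σ ∩ {x : E3 | x 0 ≤ b})
      ≤ ENNReal.ofReal (4 / (1 - σ/2) * b ^ (1 - σ/2)) := by
  set A : Set (Fin 3 → ℝ) :=
    {y | (0 < y 0 ∧ (y 1) ^ 2 + (y 2) ^ 2 ≤ (y 0) ^ (-(σ / 2))) ∧ y 0 ≤ b} with hA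
  have hAmeas : MeasurableSet A := by
    have h0 : Measurable fun y : Fin 3 → ℝ => y 0 := measurable_pi_apply _
    have h1 : Measurable fun y : Fin 3 → ℝ => y 1 := measurable_pi_apply _
    have h2 : Measurable fun y : Fin 3 → ℝ => y 2 := measurable_pi_apply _
    have hr : Measurable fun y : Fin 3 → ℝ => (y 0) ^ (-(σ / 2)) := by
      have : Measurable fun t : ℝ => t ^ (-(σ / 2)) := by measurability
      exact this.comp h0
    exact ((measurableSet_lt measurable_const h0).inter
      (measurableSet_le ((h1.pow_const 2).add (h2.pow_const 2)) hr)).inter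
      (measurableSet_le h0 measurable_const)
  have hpre : setN σ ∩ {x : E3 | x 0 ≤ b}
      = (MeasurableEquiv.toLp 2 (Fin 3 → ℝ)).symm ⁻¹' A := rfl
  rw [hpre, (EuclideanSpace.volume_preserving_symm_measurableEquiv_toLp (Fin 3)).measure_preimage
    hAmeas.nullMeasurableSet]
  set B : Set (ℝ × (Fin 2 → ℝ)) :=
    {p | (0 < p.1 ∧ (p.2 0) ^ 2 + (p.2 1) ^ 2 ≤ p.1 ^ (-(σ / 2))) ∧ p.1 ≤ b} with hB
  have hBmeas : MeasurableSet B := by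
    have h0 : Measurable fun p : ℝ × (Fin 2 → ℝ) => p.1 := measurable_fst
    have h1 : Measurable fun p : ℝ × (Fin 2 → ℝ) => p.2 0 :=
      (measurable_pi_apply _).comp measurable_snd
    have h2 : Measurable fun p : ℝ × (Fin 2 → ℝ) => p.2 1 :=
      (measurable_pi_apply _).comp measurable_snd
    have hr : Measurable fun p : ℝ × (Fin 2 → ℝ) => p.1 ^ (-(σ / 2)) := by
      have : Measurable fun t : ℝ => t ^ (-(σ / 2)) := by measurability
      exact this.comp h0
    exact ((measurableSet_lt measurable_const h0).inter
      (measurableSet_le ((h1.pow_const 2).add (h2.pow_const 2)) hr)).inter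
      (measurableSet_le h0 measurable_const)
  have hpre2 : A = (MeasurableEquiv.piFinSuccAbove (fun _ : Fin 3 => ℝ) 0) ⁻¹' B := by
    ext y
    simp only [hA, hB, Set.mem_setOf_eq, Set.mem_preimage, MeasurableEquiv.piFinSuccAbove_apply]
    rfl
  rw [hpre2, (volume_preserving_piFinSuccAbove (fun _ : Fin 3 => ℝ) 0).measure_preimage
    hBmeas.nullMeasurableSet]
  rw [Measure.volume_eq_prod, Measure.prod_apply hBmeas]
  have hslice : ∀ t : ℝ, volume (Prod.mk t ⁻¹' B)
      ≤ (Set.Ioc (0:ℝ) b).indicator (fun t => ENNReal.ofReal (4 * t ^ (-(σ / 2)))) t := by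
    intro t
    by_cases ht : t ∈ Set.Ioc (0:ℝ) b
    · rw [Set.indicator_of_mem ht]
      set r : ℝ := t ^ (-(σ / 4)) with hr
      have hr0 : 0 ≤ r := Real.rpow_nonneg ht.1.le _
      have hrsq : r ^ 2 = t ^ (-(σ / 2)) := by
        rw [hr, ← Real.rpow_natCast (t ^ (-(σ/4))) 2, ← Real.rpow_mul ht.1.le]
        congr 1
        ring
      have hsub : Prod.mk t ⁻¹' B ⊆ Set.pi Set.univ (fun _ : Fin 2 => Set.Icc (-r) r) := by
        intro z hz
        have h1 : (z 0) ^ 2 + (z 1) ^ 2 ≤ t ^ (-(σ / 2)) := hz.1.2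
        have habs : ∀ i : Fin 2, (z i) ^ 2 ≤ t ^ (-(σ / 2)) → |z i| ≤ r := by
          intro i hsq
          rw [← hrsq] at hsq
          have := Real.sqrt_le_sqrt hsq
          rwa [Real.sqrt_sq_eq_abs, Real.sqrt_sq hr0] at this
        intro i _
        fin_cases i
        · exact abs_le.mp (habs 0 (by nlinarith [sq_nonneg (z 1)]))
        · exact abs_le.mp (habs 1 (by nlinarith [sq_nonneg (z 0)]))
      calc volume (Prod.mk t ⁻¹' B) ≤ volume (Set.pi Set.univ (fun _ : Fin 2 => Set.Icc (-r) r)) :=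
            measure_mono hsub
        _ = ∏ _i : Fin 2, volume (Set.Icc (-r) r) := volume_pi_pi _
        _ = (ENNReal.ofReal (2 * r)) ^ 2 := by
            rw [Finset.prod_const, Real.volume_Icc]
            norm_num [two_mul]
        _ = ENNReal.ofReal (4 * t ^ (-(σ / 2))) := by
            rw [← ENNReal.ofReal_pow (by positivity)]
            congr 1
            rw [mul_pow, ← hrsq]
            norm_num
    · rw [Set.indicator_of_notMem ht]
      have hemp : Prod.mk t ⁻¹' B = ∅ := by
        ext z
        simp only [Set.mem_preimage, hB, Set.mem_setOf_eq, Set.mem_empty_iff_false, iff_false]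
        rintro ⟨⟨ht0, -⟩, htb⟩
        exact ht ⟨ht0, htb⟩
      rw [hemp, measure_empty]
  calc (∫⁻ t, volume (Prod.mk t ⁻¹' B))
      ≤ ∫⁻ t, (Set.Ioc (0:ℝ) b).indicator (fun t => ENNReal.ofReal (4 * t ^ (-(σ / 2)))) t :=
        lintegral_mono hslice
    _ = ∫⁻ t in Set.Ioc (0:ℝ) b, ENNReal.ofReal (4 * t ^ (-(σ / 2))) :=
        lintegral_indicator measurableSet_Ioc _
    _ = ENNReal.ofReal (∫ t in Set.Ioc (0:ℝ) b, 4 * t ^ (-(σ / 2))) := by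
        have hInt : IntegrableOn (fun t : ℝ => 4 * t ^ (-(σ / 2))) (Set.Ioc 0 b) := by
          have h1 : IntervalIntegrable (fun t : ℝ => t ^ (-(σ / 2))) volume 0 b :=
            intervalIntegral.intervalIntegrable_rpow' (by linarith)
          exact (intervalIntegrable_iff_integrableOn_Ioc_of_le hb).mp (h1.const_mul 4)
        have hnn : 0 ≤ᵐ[volume.restrict (Set.Ioc (0:ℝ) b)] fun t : ℝ => 4 * t ^ (-(σ / 2)) := by
          refine (ae_restrict_iff' measurableSet_Ioc).2 (Eventually.of_forall fun t ht => ?_)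
          have := Real.rpow_nonneg ht.1.le (-(σ / 2))
          positivity
        exact (ofReal_integral_eq_lintegral_ofReal hInt hnn).symm
    _ ≤ ENNReal.ofReal (4 / (1 - σ / 2) * b ^ (1 - σ / 2)) := by
        apply ENNReal.ofReal_le_ofReal
        rw [← intervalIntegral.integral_of_le hb, intervalIntegral.integral_const_mul,
          integral_rpow (Or.inl (by linarith)), Real.zero_rpow (by linarith)]
        rw [show -(σ / 2) + 1 = 1 - σ / 2 by ring]
        rw [div_mul_eq_mul_div, mul_div_assoc]
        ring_nf
        exact le_refl _

/-- Decay of `‖Δθ_R‖_{L^{q(·)}(ℝ³)}` as `R → ∞` for the conjugate-type exponent `q`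
adapted to the region `𝒩` (with `q ≡ 1` on `𝒩`). -/
theorem laplacian_cutoff_norm_tendsto_zero_shrinking
    (σ : ℝ) (hσ0 : 0 < σ) (hσ1 : σ < 1)
    (q : E3 → ℝ) (hqmeas : Measurable q) (hq1 : ∀ x, 1 ≤ q x)
    (hout_lb : (9 / 5 : ℝ) < essInf q (volume.restrict (setN σ)ᶜ))
    (hout_le : essInf q (volume.restrict (setN σ)ᶜ) ≤ essSup q (volume.restrict (setN σ)ᶜ))
    (hout_ub : essSup q (volume.restrict (setN σ)ᶜ) < 3)
    (hin : ∀ x ∈ setN σ, q x = 1)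
    (θ : E3 → ℝ) (hθsmooth : ContDiff ℝ (⊤ : ℕ∞) θ) (hθsupp : HasCompactSupport θ)
    (hθ0 : ∀ x, 0 ≤ θ x) (hθ1 : ∀ x, θ x ≤ 1)
    (hθin : ∀ x : E3, ‖x‖ ≤ 1 → θ x = 1) (hθout : ∀ x : E3, 2 ≤ ‖x‖ → θ x = 0) :
    Tendsto (fun R : ℝ => varLpNorm q (fun x => lap3 (fun y => θ (R⁻¹ • y)) x))
      atTop (𝓝 0) := by
  classical
  obtain ⟨C, hC1, hCbd, hCvan⟩ := lap3_bound hθsmooth hθout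
  have hC0 : (0:ℝ) < C := lt_of_lt_of_le one_pos hC1
  set κ : ℝ := Real.sqrt Real.pi ^ 3 / Real.Gamma (3 / 2 + 1) with hκdef
  have hκ0 : 0 ≤ κ := by
    have hΓ := Real.Gamma_pos_of_pos (show (0:ℝ) < 3/2 + 1 by norm_num)
    positivity
  have hball : ∀ R : ℝ, 0 ≤ R → volume (Metric.closedBall (0 : E3) R)
      = ENNReal.ofReal (R ^ 3 * κ) := by
    intro R hR
    rw [EuclideanSpace.volume_closedBall]
    simp only [Fintype.card_fin]
    rw [← ENNReal.ofReal_pow hR, ← ENNReal.ofReal_mul (by positivity)]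
    norm_num [hκdef]
  have hcoord : ∀ x : E3, |x 0| ≤ ‖x‖ := by
    intro x
    rw [EuclideanSpace.norm_eq, ← Real.sqrt_sq (abs_nonneg (x 0))]
    apply Real.sqrt_le_sqrt
    rw [sq_abs]
    have := Finset.single_le_sum (f := fun i => ‖x i‖ ^ 2)
      (fun i _ => sq_nonneg _) (Finset.mem_univ 0)
    simpa [Real.norm_eq_abs, sq_abs] using this
  have h95 : ∀ᵐ x ∂(volume.restrict (setN σ)ᶜ), (9/5:ℝ) < q x := by
    have hbdd : IsBoundedUnder (· ≥ ·) (ae (volume.restrict (setN σ)ᶜ)) q :=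
      isBoundedUnder_of ⟨1, fun x => hq1 x⟩
    exact eventually_lt_of_lt_liminf hout_lb hbdd
  have key : ∀ ε : ℝ, 0 < ε → ∀ᶠ R : ℝ in atTop,
      modularV q (fun x => lap3 (fun y => θ (R⁻¹ • y)) x / ε) ≤ 1 := by
    intro ε hε
    have hA : Tendsto (fun R : ℝ => (C * R⁻¹^2 / ε) * (4/(1-σ/2) * (2*R)^(1-σ/2)))
        atTop (𝓝 0) := by
      have h1 : Tendsto (fun R : ℝ => ((C/ε) * (4/(1-σ/2) * (2:ℝ)^(1-σ/2))) * R ^ (-(1+σ/2)))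
          atTop (𝓝 0) := by
        have := (tendsto_rpow_neg_atTop (by linarith : (0:ℝ) < 1+σ/2)).const_mul
          ((C/ε) * (4/(1-σ/2) * (2:ℝ)^(1-σ/2)))
        simpa using this
      apply h1.congr'
      filter_upwards [eventually_gt_atTop 0] with R hR
      rw [Real.mul_rpow (by norm_num) hR.le,
        show -(1+σ/2) = (-2 : ℝ) + (1 - σ/2) by ring, Real.rpow_add hR,
        show (-2:ℝ) = -(2:ℕ) by norm_num, Real.rpow_neg hR.le, Real.rpow_natCast, ← inv_pow]
      ring
    have hB : Tendsto (fun R : ℝ => (C * R⁻¹^2 / ε) ^ ((9:ℝ)/5) * ((2*R)^3 * κ))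
        atTop (𝓝 0) := by
      have h1 : Tendsto (fun R : ℝ => ((C/ε) ^ ((9:ℝ)/5) * (8 * κ)) * R ^ (-(3/5 : ℝ)))
          atTop (𝓝 0) := by
        have := (tendsto_rpow_neg_atTop (by norm_num : (0:ℝ) < 3/5)).const_mul
          ((C/ε) ^ ((9:ℝ)/5) * (8 * κ))
        simpa using this
      apply h1.congr'
      filter_upwards [eventually_gt_atTop 0] with R hR
      have hre : C * R⁻¹^2 / ε = (C/ε) * (R ^ ((-2:ℝ))) := by
        rw [show (-2:ℝ) = -(2:ℕ) by norm_num, Real.rpow_neg hR.le, Real.rpow_natCast, ← inv_pow]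
        ring
      rw [hre, Real.mul_rpow (by positivity) (Real.rpow_nonneg hR.le _), ← Real.rpow_mul hR.le]
      rw [show (-(3/5:ℝ)) = (-2)*(9/5) + ((3:ℕ):ℝ) by norm_num, Real.rpow_add hR,
        Real.rpow_natCast]
      ring
    have hM : Tendsto (fun R : ℝ => C * R⁻¹^2 / ε) atTop (𝓝 0) := by
      have h2 : Tendsto (fun R : ℝ => R⁻¹^2) atTop (𝓝 (0:ℝ)) := by
        have : Tendsto (fun R : ℝ => R⁻¹) atTop (𝓝 0) := tendsto_inv_atTop_zero
        have := this.pow 2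
        simpa using this
      have := (h2.const_mul C).div_const ε
      simpa using this
    filter_upwards [eventually_gt_atTop 0,
      hA.eventually (gt_mem_nhds (by norm_num : (0:ℝ) < 1/2)),
      hB.eventually (gt_mem_nhds (by norm_num : (0:ℝ) < 1/2)),
      hM.eventually (gt_mem_nhds (by norm_num : (0:ℝ) < 1))] with R hR0 hA2 hB2 hM1
    set M : ℝ := C * R⁻¹^2 / ε with hMdef
    have hM0 : 0 ≤ M := by positivity
    have hg : ∀ x : E3, lap3 (fun y => θ (R⁻¹ • y)) x = R⁻¹^2 * lap3 θ (R⁻¹ • x) :=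
      lap3_comp_smul hθsmooth R⁻¹
    have hgb : ∀ x : E3, |lap3 (fun y => θ (R⁻¹ • y)) x| ≤ C * R⁻¹^2 := by
      intro x
      rw [hg x, abs_mul, abs_of_nonneg (sq_nonneg _)]
      calc R⁻¹^2 * |lap3 θ (R⁻¹ • x)| ≤ R⁻¹^2 * C :=
            mul_le_mul_of_nonneg_left (hCbd _) (sq_nonneg _)
        _ = C * R⁻¹^2 := mul_comm _ _
    have hgv : ∀ x : E3, 2*R < ‖x‖ → lap3 (fun y => θ (R⁻¹ • y)) x = 0 := by
      intro x hx
      rw [hg x, hCvan _ ?_, mul_zero]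
      rw [norm_smul, Real.norm_eq_abs, abs_of_pos (inv_pos.mpr hR0), inv_mul_eq_div]
      rw [lt_div_iff₀ hR0]
      linarith
    unfold modularV
    rw [← lintegral_add_compl (fun x => ENNReal.ofReal
      (|lap3 (fun y => θ (R⁻¹ • y)) x / ε| ^ q x)) (measurableSet_setN σ)]
    have hpart1 : (∫⁻ x in setN σ, ENNReal.ofReal (|lap3 (fun y => θ (R⁻¹ • y)) x / ε| ^ q x))
        ≤ ENNReal.ofReal ((C * R⁻¹^2 / ε) * (4/(1-σ/2) * (2*R)^(1-σ/2))) := by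
      have hx0meas : Measurable fun x : E3 => x 0 := (measurable_pi_apply _).comp (WithLp.measurable_ofLp 2 _)
      have hTmeas : MeasurableSet (setN σ ∩ {x : E3 | x 0 ≤ 2*R}) :=
        (measurableSet_setN σ).inter (measurableSet_le hx0meas measurable_const)
      have hstep : (∫⁻ x in setN σ, ENNReal.ofReal
          (|lap3 (fun y => θ (R⁻¹ • y)) x / ε| ^ q x))
          ≤ ∫⁻ x in setN σ, (setN σ ∩ {x : E3 | x 0 ≤ 2*R}).indicator
              (fun _ => ENNReal.ofReal M) x := by
        apply setLIntegral_mono (measurable_const.indicator hTmeas)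
        intro x hx
        rw [hin x hx, Real.rpow_one]
        by_cases hx2 : x 0 ≤ 2*R
        · rw [Set.indicator_of_mem (Set.mem_inter hx hx2)]
          apply ENNReal.ofReal_le_ofReal
          rw [abs_div, abs_of_pos hε, hMdef]
          gcongr
          exact hgb x
        · have hz : lap3 (fun y => θ (R⁻¹ • y)) x = 0 := by
            apply hgv x
            calc 2*R < x 0 := not_le.mp hx2
              _ ≤ |x 0| := le_abs_self _
              _ ≤ ‖x‖ := hcoord x
          simp [hz]
      calc (∫⁻ x in setN σ, ENNReal.ofReal (|lap3 (fun y => θ (R⁻¹ • y)) x / ε| ^ q x))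
          ≤ ∫⁻ x in setN σ, (setN σ ∩ {x : E3 | x 0 ≤ 2*R}).indicator
              (fun _ => ENNReal.ofReal M) x := hstep
        _ ≤ ∫⁻ x, (setN σ ∩ {x : E3 | x 0 ≤ 2*R}).indicator (fun _ => ENNReal.ofReal M) x :=
            lintegral_mono' Measure.restrict_le_self le_rfl
        _ = ENNReal.ofReal M * volume (setN σ ∩ {x : E3 | x 0 ≤ 2*R}) := by
            rw [lintegral_indicator hTmeas, setLIntegral_const]
        _ ≤ ENNReal.ofReal M * ENNReal.ofReal (4/(1-σ/2) * (2*R)^(1-σ/2)) := by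
            exact mul_le_mul_right (volume_setN_le σ hσ0 hσ1 (2*R) (by positivity)) _
        _ = ENNReal.ofReal ((C * R⁻¹^2 / ε) * (4/(1-σ/2) * (2*R)^(1-σ/2))) := by
            rw [← ENNReal.ofReal_mul hM0]
    have hpart2 : (∫⁻ x in (setN σ)ᶜ, ENNReal.ofReal
        (|lap3 (fun y => θ (R⁻¹ • y)) x / ε| ^ q x))
        ≤ ENNReal.ofReal ((C * R⁻¹^2 / ε) ^ ((9:ℝ)/5) * ((2*R)^3 * κ)) := by
      have hstep : (∫⁻ x in (setN σ)ᶜ, ENNReal.ofReal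
          (|lap3 (fun y => θ (R⁻¹ • y)) x / ε| ^ q x))
          ≤ ∫⁻ x in (setN σ)ᶜ, (Metric.closedBall (0:E3) (2*R)).indicator
              (fun _ => ENNReal.ofReal (M ^ ((9:ℝ)/5))) x := by
        apply lintegral_mono_ae
        filter_upwards [h95] with x hx95
        by_cases hx2 : ‖x‖ ≤ 2*R
        · rw [Set.indicator_of_mem (by
            simpa [Metric.mem_closedBall, dist_zero_right] using hx2)]
          apply ENNReal.ofReal_le_ofReal
          rw [abs_div, abs_of_pos hε]
          set t : ℝ := |lap3 (fun y => θ (R⁻¹ • y)) x| / ε with htdef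
          have ht0 : 0 ≤ t := by positivity
          have htM : t ≤ M := by
            rw [htdef, hMdef]
            gcongr
            exact hgb x
          rcases eq_or_lt_of_le ht0 with h0 | h0
          · rw [← h0, Real.zero_rpow (by linarith [hq1 x] : q x ≠ 0)]
            positivity
          · calc t ^ q x ≤ t ^ ((9:ℝ)/5) :=
                Real.rpow_le_rpow_of_exponent_ge h0 (by linarith) (le_of_lt hx95)
              _ ≤ M ^ ((9:ℝ)/5) := Real.rpow_le_rpow ht0 htM (by norm_num)
        · have hz : lap3 (fun y => θ (R⁻¹ • y)) x = 0 := hgv x (not_le.mp hx2)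
          rw [hz]
          simp [Real.zero_rpow (by linarith [hq1 x] : q x ≠ 0)]
      calc (∫⁻ x in (setN σ)ᶜ, ENNReal.ofReal (|lap3 (fun y => θ (R⁻¹ • y)) x / ε| ^ q x))
          ≤ ∫⁻ x in (setN σ)ᶜ, (Metric.closedBall (0:E3) (2*R)).indicator
              (fun _ => ENNReal.ofReal (M ^ ((9:ℝ)/5))) x := hstep
        _ ≤ ∫⁻ x, (Metric.closedBall (0:E3) (2*R)).indicator
              (fun _ => ENNReal.ofReal (M ^ ((9:ℝ)/5))) x :=
            lintegral_mono' Measure.restrict_le_self le_rfl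
        _ = ENNReal.ofReal (M ^ ((9:ℝ)/5)) * volume (Metric.closedBall (0:E3) (2*R)) := by
            rw [lintegral_indicator measurableSet_closedBall, setLIntegral_const]
        _ = ENNReal.ofReal (M ^ ((9:ℝ)/5)) * ENNReal.ofReal ((2*R)^3 * κ) := by
            rw [hball (2*R) (by positivity)]
        _ = ENNReal.ofReal ((C * R⁻¹^2 / ε) ^ ((9:ℝ)/5) * ((2*R)^3 * κ)) := by
            rw [← ENNReal.ofReal_mul (Real.rpow_nonneg hM0 _)]
    calc (∫⁻ x in setN σ, ENNReal.ofReal (|lap3 (fun y => θ (R⁻¹ • y)) x / ε| ^ q x))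
          + ∫⁻ x in (setN σ)ᶜ, ENNReal.ofReal (|lap3 (fun y => θ (R⁻¹ • y)) x / ε| ^ q x)
        ≤ ENNReal.ofReal ((C * R⁻¹^2 / ε) * (4/(1-σ/2) * (2*R)^(1-σ/2)))
          + ENNReal.ofReal ((C * R⁻¹^2 / ε) ^ ((9:ℝ)/5) * ((2*R)^3 * κ)) :=
          add_le_add hpart1 hpart2
      _ ≤ ENNReal.ofReal (1/2) + ENNReal.ofReal (1/2) :=
          add_le_add (ENNReal.ofReal_le_ofReal hA2.le) (ENNReal.ofReal_le_ofReal hB2.le)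
      _ = 1 := by
          rw [← ENNReal.ofReal_add (by norm_num) (by norm_num)]
          norm_num
  have nonneg : ∀ R : ℝ, 0 ≤ varLpNorm q (fun x => lap3 (fun y => θ (R⁻¹ • y)) x) := by
    intro R
    apply Real.sInf_nonneg
    rintro l ⟨hl, -⟩
    exact hl.le
  rw [Metric.tendsto_nhds]
  intro ε hε
  filter_upwards [key (ε/2) (by linarith)] with R hmod
  rw [Real.dist_eq, sub_zero, abs_of_nonneg (nonneg R)]
  have hle : varLpNorm q (fun x => lap3 (fun y => θ (R⁻¹ • y)) x) ≤ ε/2 :=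
    csInf_le ⟨0, fun l hl => hl.1.le⟩ ⟨by linarith, hmod⟩
  linarith
end
end
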